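/- arXiv:2601.19274 — 2 statements merged into one kernel-verified Lean document; each statement's English description precedes it below -/
import Mathlib

section
/- Let α, β: Ω → ℝ be C¹ on an open set Ω ⊆ ℝ², with 4α − β² > 0, and suppose i: Ω → A is a C¹ map into a fixed two-dimensional ℝ-algebra (with multiplication depending on the point via i(z)² = −β(z)i(z) − α(z), realized in coefficients). Writing i_x + i·i_y = G₀ + G₁·i in the basis {1, i}, the coefficients satisfy the system α_x = α·β_y − β·G₀ + 2α·G₁ and β_x + α_y = β·β_y − 2G₀ + β·G₁. -/
/-- Partial derivative in the `x`-direction. -/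
noncomputable def pdx {E : Type*} [NormedAddCommGroup E] [NormedSpace ℝ E]
    (f : ℝ × ℝ → E) (z : ℝ × ℝ) : E := fderiv ℝ f z (1, 0)

/-- Partial derivative in the `y`-direction. -/
noncomputable def pdy {E : Type*} [NormedAddCommGroup E] [NormedSpace ℝ E]
    (f : ℝ × ℝ → E) (z : ℝ × ℝ) : E := fderiv ℝ f z (0, 1)

/-- Forced coefficient system: with `i_x = (Ax, Bx)`, `i_y = (Ay, By)` the
unique solutions of `(2i+β)i_x + α_x + β_x i = 0`, `(2i+β)i_y + α_y + β_y i = 0`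
(in coefficient form, with product `(u₁+v₁i)(u₂+v₂i) =
(u₁u₂ − αv₁v₂) + (u₁v₂ + v₁u₂ − βv₁v₂)i`), and
`i_x + i·i_y = G₀ + G₁·i`, the coefficients satisfy
`α_x = α·β_y − β·G₀ + 2α·G₁` and `β_x + α_y = β·β_y − 2G₀ + β·G₁`. -/
theorem stmt7 (Ω : Set (ℝ × ℝ)) (hΩ : IsOpen Ω)
    (α β Ax Bx Ay By G₀ G₁ : ℝ × ℝ → ℝ)
    (hα : ContDiffOn ℝ 1 α Ω) (hβ : ContDiffOn ℝ 1 β Ω)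
    (hell : ∀ z ∈ Ω, 4 * α z - (β z) ^ 2 > 0)
    -- (2i+β)·i_x + α_x + β_x·i = 0 in coefficients, where 2i+β = (β,2):
    (hix : ∀ z ∈ Ω,
      β z * Ax z - 2 * α z * Bx z + pdx α z = 0 ∧
      2 * Ax z + β z * Bx z - 2 * β z * Bx z + pdx β z = 0)
    (hiy : ∀ z ∈ Ω,
      β z * Ay z - 2 * α z * By z + pdy α z = 0 ∧
      2 * Ay z + β z * By z - 2 * β z * By z + pdy β z = 0)
    -- i_x + i·i_y = G₀ + G₁·i in coefficients, where i·(Ay,By) = (−α·By, Ay − β·By):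
    (hG : ∀ z ∈ Ω,
      G₀ z = Ax z - α z * By z ∧ G₁ z = Bx z + Ay z - β z * By z) :
    ∀ z ∈ Ω,
      pdx α z = α z * pdy β z - β z * G₀ z + 2 * α z * G₁ z ∧
      pdx β z + pdy α z = β z * pdy β z - 2 * G₀ z + β z * G₁ z := by
  intro z hz
  obtain ⟨hx1, hx2⟩ := hix z hz
  obtain ⟨hy1, hy2⟩ := hiy z hz
  obtain ⟨hg1, hg2⟩ := hG z hz
  rw [hg1, hg2]
  constructor
  · linear_combination hx1 - α z * hy2
  · linear_combination hx2 + hy1 - β z * hy2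
end

section
/- For the ε-family, the function ψ(x,y) = C·√(S(x,y)) with S = 4(1−εx) − ε²y² satisfies the real weight system ψ_x = A_y·ψ and ψ_y = B_y·ψ on {S > 0, 1−εx ≠ 0}, where A_y = (βα_y − 2αβ_y)/Δ and B_y = (2α_y − ββ_y)/Δ with α = 1/(1−εx), β = εy/(1−εx), Δ = 4α − β². -/
section
variable {E : Type*} [NormedAddCommGroup E] [NormedSpace ℝ E] {f : ℝ × ℝ → E} {z : ℝ × ℝ}

theorem pdx_eq_deriv (hf : DifferentiableAt ℝ f z) :
    pdx f z = deriv (fun t => f (t, z.2)) z.1 :=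
  (hf.hasFDerivAt.comp_hasDerivAt z.1
    ((hasDerivAt_id z.1).prodMk (hasDerivAt_const z.1 z.2))).deriv.symm

theorem pdy_eq_deriv (hf : DifferentiableAt ℝ f z) :
    pdy f z = deriv (fun t => f (z.1, t)) z.2 :=
  (hf.hasFDerivAt.comp_hasDerivAt z.2
    ((hasDerivAt_const z.2 z.1).prodMk (hasDerivAt_id z.2))).deriv.symm

end

theorem fderiv_const_mul_sqrt_apply {E : Type*} [NormedAddCommGroup E] [NormedSpace ℝ E]
    {f : E → ℝ} {z : E} (C : ℝ) (hf : DifferentiableAt ℝ f z) (hz : 0 < f z) (v : E) :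
    fderiv ℝ (fun w => C * √(f w)) z v = fderiv ℝ f z v / (2 * f z) * (C * √(f z)) := by
  rw [((hf.hasFDerivAt.sqrt hz.ne').const_mul C).fderiv]
  have hs : √(f z) ^ 2 = f z := Real.sq_sqrt hz.le
  simp only [smul_apply, smul_eq_mul]
  field_simp
  rw [hs]
  ring

/-- For the ε-family, `ψ = C·√S` with `S = 4(1−εx) − ε²y²` satisfies the weight
system `ψ_x = A_y·ψ`, `ψ_y = B_y·ψ` on `{S > 0, 1 − εx ≠ 0}`, where
`A_y = (βα_y − 2αβ_y)/Δ`, `B_y = (2α_y − ββ_y)/Δ`. -/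
theorem stmt16 (ε C : ℝ) :
    let α : ℝ × ℝ → ℝ := fun w => 1 / (1 - ε * w.1)
    let β : ℝ × ℝ → ℝ := fun w => ε * w.2 / (1 - ε * w.1)
    let Δ : ℝ × ℝ → ℝ := fun w => 4 * α w - (β w) ^ 2
    let S : ℝ × ℝ → ℝ := fun w => 4 * (1 - ε * w.1) - ε ^ 2 * w.2 ^ 2
    let ψ : ℝ × ℝ → ℝ := fun w => C * Real.sqrt (S w)
    let Ay : ℝ × ℝ → ℝ := fun w => (β w * pdy α w - 2 * α w * pdy β w) / Δ w
    let By : ℝ × ℝ → ℝ := fun w => (2 * pdy α w - β w * pdy β w) / Δ w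
    ∀ z : ℝ × ℝ, S z > 0 → 1 - ε * z.1 ≠ 0 →
      pdx ψ z = Ay z * ψ z ∧ pdy ψ z = By z * ψ z := by
  intro α β Δ S ψ Ay By z hS hu
  obtain ⟨x, y⟩ := z
  have hαy : pdy α (x, y) = 0 := by
    rw [pdy_eq_deriv (f := α) (by fun_prop (disch := assumption))]
    simp [α]
  have hβy : pdy β (x, y) = ε / (1 - ε * x) := by
    rw [pdy_eq_deriv (f := β) (by fun_prop (disch := assumption))]
    simp [β]
  have hSd : DifferentiableAt ℝ S (x, y) := by fun_prop
  have hSx : pdx S (x, y) = -4 * ε := by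
    rw [pdx_eq_deriv hSd]
    simp [S]
  have hSy : pdy S (x, y) = -2 * ε ^ 2 * y := by
    rw [pdy_eq_deriv hSd]
    simp [S]
    ring
  have hΔ : Δ (x, y) = S (x, y) / (1 - ε * x) ^ 2 := by
    simp only [Δ, α, β, S]
    field_simp
  constructor
  · rw [pdx, fderiv_const_mul_sqrt_apply C hSd hS, ← pdx, hSx]
    simp only [Ay, ψ, hαy, hβy, hΔ, α, β]
    field_simp
    ring
  · rw [pdy, fderiv_const_mul_sqrt_apply C hSd hS, ← pdy, hSy]
    simp only [By, ψ, hαy, hβy, hΔ, α, β]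
    field_simp
    ring
end
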